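/- arXiv:2105.12204 — 2 statements merged into one kernel-verified Lean document; each statement's English description precedes it below -/
import Mathlib

section
/- (Appendix Lemma, direction (i) ⇒ (ii).) Let p ≥ 0. Suppose that for every x ∈ X_V the supremum defining V_p(x) is attained by some controller, and that every controller attaining it is safe for x. Then for every x ∈ X_V and every controller u_F that is not safe for x, G(x,u_F) − p·ρ(x,u_F) < V(x). -/
open Set

noncomputable section

/-- Trajectory of the discrete-time system `x_{t+1} = f(x_t, u(x_t))` starting at `x`. -/
def traj {X U : Type*} (f : X → U → X) (u : X → U) (x : X) : ℕ → X
  | 0 => x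
  | t + 1 => f (traj f u x t) (u (traj f u x t))

/-- The controller `u` is safe for the state `x`: the trajectory never enters the failure set. -/
def SafeFor {X U : Type*} (f : X → U → X) (XF : Set X) (u : X → U) (x : X) : Prop :=
  ∀ t : ℕ, traj f u x t ∉ XF

/-- The viability kernel: states from which some controller avoids failure forever. -/
def viab {X U : Type*} (f : X → U → X) (XF : Set X) : Set X :=
  {x | ∃ u : X → U, SafeFor f XF u x}

/-- Discounted return `G(x,u)`. -/
def ret {X U : Type*} (γ : ℝ) (f : X → U → X) (r : X → U → ℝ) (x : X) (u : X → U) : ℝ :=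
  ∑' t : ℕ, γ ^ t * r (traj f u x t) (u (traj f u x t))

/-- Discounted risk `ρ(x,u)`. -/
def risk {X U : Type*} (γ : ℝ) (f : X → U → X) (XF : Set X) (x : X) (u : X → U) : ℝ :=
  ∑' t : ℕ, γ ^ t * XF.indicator (fun _ => (1 : ℝ)) (traj f u x t)

/-- Penalized value function `V_p(x)`. -/
def Vpen {X U : Type*} (γ : ℝ) (f : X → U → X) (XF : Set X) (r : X → U → ℝ) (p : ℝ)
    (x : X) : ℝ :=
  ⨆ u : X → U, (ret γ f r x u - p * risk γ f XF x u)

/-- Constrained value function `V(x)`: supremum of the return over safe controllers. -/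
def Vcon {X U : Type*} (γ : ℝ) (f : X → U → X) (XF : Set X) (r : X → U → ℝ) (x : X) : ℝ :=
  ⨆ u : {u : X → U // SafeFor f XF u x}, ret γ f r x (u : X → U)

/-! The penalized supremum is attained by a safe controller `u₀`, whose risk vanishes, so
`V_p(x) = G(x, u₀) ≤ V(x)`; an unsafe controller is not a maximizer, hence falls strictly below
`V_p(x)`. Boundedness of `r` is what makes both `⨆`s genuine suprema (an unbounded `⨆` is `0`). -/

theorem abs_tsum_geometric_mul_le {γ C : ℝ} (hγ0 : 0 ≤ γ) (hγ1 : γ < 1) {a : ℕ → ℝ}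
    (ha : ∀ t, |a t| ≤ C) : |∑' t, γ ^ t * a t| ≤ C * (1 - γ)⁻¹ :=
  tsum_of_norm_bounded (f := fun t => γ ^ t * a t)
    ((hasSum_geometric_of_lt_one hγ0 hγ1).mul_left C) fun t => by
    rw [Real.norm_eq_abs, abs_mul, abs_pow, abs_of_nonneg hγ0]
    exact (mul_le_mul_of_nonneg_left (ha t) (pow_nonneg hγ0 t)).trans_eq (mul_comm _ _)

section Discounted

variable {X U : Type*} {f : X → U → X} {XF : Set X} {γ : ℝ} {r : X → U → ℝ} {x : X}
  {u : X → U}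

theorem abs_ret_le {C : ℝ} (hγ0 : 0 ≤ γ) (hγ1 : γ < 1) (hC : ∀ x a, |r x a| ≤ C) :
    |ret γ f r x u| ≤ C * (1 - γ)⁻¹ :=
  abs_tsum_geometric_mul_le hγ0 hγ1 fun _ => hC _ _

theorem abs_risk_le (hγ0 : 0 ≤ γ) (hγ1 : γ < 1) : |risk γ f XF x u| ≤ (1 - γ)⁻¹ :=
  (abs_tsum_geometric_mul_le hγ0 hγ1 fun t => by
    by_cases h : traj f u x t ∈ XF <;> simp [h]).trans_eq (one_mul _)

theorem risk_eq_zero_of_safeFor (hu : SafeFor f XF u x) : risk γ f XF x u = 0 := by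
  simp [risk, indicator_of_notMem (hu _)]

theorem penalized_le_Vpen {C : ℝ} (hγ0 : 0 ≤ γ) (hγ1 : γ < 1) (hC : ∀ x a, |r x a| ≤ C)
    (p : ℝ) (u : X → U) : ret γ f r x u - p * risk γ f XF x u ≤ Vpen γ f XF r p x := by
  refine le_ciSup (f := fun v => ret γ f r x v - p * risk γ f XF x v)
    ⟨C * (1 - γ)⁻¹ + |p| * (1 - γ)⁻¹, ?_⟩ u
  rintro _ ⟨v, rfl⟩
  have hret := (abs_ret_le (f := f) (x := x) (u := v) hγ0 hγ1 hC).trans' (le_abs_self _)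
  have hrisk : -(p * risk γ f XF x v) ≤ |p| * (1 - γ)⁻¹ :=
    (neg_le_abs _).trans <| (abs_mul _ _).trans_le <|
      mul_le_mul_of_nonneg_left (abs_risk_le hγ0 hγ1) (abs_nonneg p)
  linarith

theorem ret_le_Vcon {C : ℝ} (hγ0 : 0 ≤ γ) (hγ1 : γ < 1) (hC : ∀ x a, |r x a| ≤ C)
    (hu : SafeFor f XF u x) : ret γ f r x u ≤ Vcon γ f XF r x := by
  refine le_ciSup (f := fun v : {v : X → U // SafeFor f XF v x} => ret γ f r x v)
    ⟨C * (1 - γ)⁻¹, ?_⟩ ⟨u, hu⟩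
  rintro _ ⟨v, rfl⟩
  exact (le_abs_self _).trans (abs_ret_le hγ0 hγ1 hC)

end Discounted

theorem unsafe_strictly_suboptimal_of_maximizers_safe_general {X U : Type*}
    (f : X → U → X) (XF : Set X) (γ : ℝ) (hγ0 : 0 < γ) (hγ1 : γ < 1)
    (r : X → U → ℝ) (hr : ∃ C : ℝ, ∀ x a, |r x a| ≤ C)
    (p : ℝ)
    (hattain : ∀ x ∈ viab f XF, ∃ u : X → U,
      ret γ f r x u - p * risk γ f XF x u = Vpen γ f XF r p x)
    (hsafe : ∀ x ∈ viab f XF, ∀ u : X → U,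
      ret γ f r x u - p * risk γ f XF x u = Vpen γ f XF r p x → SafeFor f XF u x) :
    ∀ x ∈ viab f XF, ∀ uF : X → U, ¬ SafeFor f XF uF x →
      ret γ f r x uF - p * risk γ f XF x uF < Vcon γ f XF r x := by
  obtain ⟨C, hC⟩ := hr
  intro x hx uF huF
  obtain ⟨u₀, hu₀⟩ := hattain x hx
  have hsafe₀ : SafeFor f XF u₀ x := hsafe x hx u₀ hu₀
  calc ret γ f r x uF - p * risk γ f XF x uF < Vpen γ f XF r p x :=
        (penalized_le_Vpen hγ0.le hγ1 hC p uF).lt_of_ne fun h => huF (hsafe x hx uF h)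
    _ = ret γ f r x u₀ := by rw [← hu₀, risk_eq_zero_of_safeFor hsafe₀, mul_zero, sub_zero]
    _ ≤ Vcon γ f XF r x := ret_le_Vcon hγ0.le hγ1 hC hsafe₀

/-- Appendix Lemma, (i) ⇒ (ii): if the penalized supremum is attained at
every viable state and every maximizer is safe, then every unsafe controller is strictly
suboptimal for the penalized objective, compared with the constrained value. -/
theorem unsafe_strictly_suboptimal_of_maximizers_safe {X U : Type*} [Nonempty U]
    (f : X → U → X) (XF : Set X) (γ : ℝ) (hγ0 : 0 < γ) (hγ1 : γ < 1)
    (r : X → U → ℝ) (hr : ∃ C : ℝ, ∀ x a, |r x a| ≤ C)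
    (p : ℝ) (hp : 0 ≤ p)
    (hattain : ∀ x ∈ viab f XF, ∃ u : X → U,
      ret γ f r x u - p * risk γ f XF x u = Vpen γ f XF r p x)
    (hsafe : ∀ x ∈ viab f XF, ∀ u : X → U,
      ret γ f r x u - p * risk γ f XF x u = Vpen γ f XF r p x → SafeFor f XF u x) :
    ∀ x ∈ viab f XF, ∀ uF : X → U, ¬ SafeFor f XF uF x →
      ret γ f r x uF - p * risk γ f XF x uF < Vcon γ f XF r x :=
  unsafe_strictly_suboptimal_of_maximizers_safe_general f XF γ hγ0 hγ1 r hr p hattain hsafe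
end
end

section
/- (Lemma 3(ii), discrete time.) Assume X_F is absorbing (f(x,a) ∈ X_F whenever x ∈ X_F) and nonempty, r(x,a) = 0 whenever x ∈ X_F, and the bounded time-to-failure assumption holds with bound T_f. Then for every p ≥ 0 and every x ∈ X_U, V_p(x) ≤ R_{X_U} · (1 − γ^{T_f+1}) / (1 − γ) − p · γ^{T_f}, where R_{X_U} = sSup {r(x,a) | x ∈ X_U, a ∈ U}. -/
open Set

noncomputable section

/-- `R_{Q_V}`: infimum of the reward over state-control pairs transitioning into the kernel. -/
def RQV {X U : Type*} (f : X → U → X) (XF : Set X) (r : X → U → ℝ) : ℝ :=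
  sInf {y : ℝ | ∃ q : X × U, f q.1 q.2 ∈ viab f XF ∧ y = r q.1 q.2}

/-- `R_{Q_U}`: supremum of the reward over state-control pairs transitioning out of the kernel. -/
def RQU {X U : Type*} (f : X → U → X) (XF : Set X) (r : X → U → ℝ) : ℝ :=
  sSup {y : ℝ | ∃ q : X × U, f q.1 q.2 ∉ viab f XF ∧ y = r q.1 q.2}

/-- `R_{X_U}`: supremum of the reward over the unviability kernel. -/
def RXU {X U : Type*} (f : X → U → X) (XF : Set X) (r : X → U → ℝ) : ℝ :=
  sSup {y : ℝ | ∃ x, x ∉ viab f XF ∧ ∃ a : U, y = r x a}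

/-- `inf_{X_V} V`: infimum of the constrained value function over the viability kernel. -/
def infV {X U : Type*} (γ : ℝ) (f : X → U → X) (XF : Set X) (r : X → U → ℝ) : ℝ :=
  sInf {y : ℝ | ∃ x ∈ viab f XF, y = Vcon γ f XF r x}

/-- `sup_{X_U} V_p`: supremum of the penalized value function over the unviability kernel. -/
def supVp {X U : Type*} (γ : ℝ) (f : X → U → X) (XF : Set X) (r : X → U → ℝ) (p : ℝ) : ℝ :=
  sSup {y : ℝ | ∃ x, x ∉ viab f XF ∧ y = Vpen γ f XF r p x}


/-! Along any trajectory the rewards are at most `R_{X_U}`, because absorption keeps every state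
of a trajectory from `x ∈ X_U` inside `X_U`; after time `T_f` the state has failed, so the
rewards vanish and the return is a truncated geometric sum. The risk collects at least the
term `γ ^ T_f` of the failed state. -/

section Trajectory

variable {X U : Type*} (f : X → U → X)

theorem traj_mem_of_forall_apply_mem {S : Set X} {w : X → U} (hS : ∀ z ∈ S, f z (w z) ∈ S)
    {x : X} (hx : x ∈ S) (t : ℕ) : traj f w x t ∈ S := by
  induction t with
  | zero => exact hx
  | succ t ih => exact hS _ ih

variable {XF : Set X}

theorem traj_mem_of_le (habs : ∀ x ∈ XF, ∀ a : U, f x a ∈ XF) (u : X → U) (x : X) {s t : ℕ}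
    (hst : s ≤ t) (hs : traj f u x s ∈ XF) : traj f u x t ∈ XF :=
  Nat.le_induction hs (fun _ _ ih => habs _ ih _) t hst

theorem notMem_of_mem_viab {x : X} (hx : x ∈ viab f XF) : x ∉ XF := by
  obtain ⟨u, hu⟩ := hx
  exact hu 0

theorem mem_viab_of_apply_mem_viab {z : X} {a : U} (hz : z ∉ XF) (hza : f z a ∈ viab f XF) :
    z ∈ viab f XF := by
  classical
  obtain ⟨u, hu⟩ := hza
  -- Play `a` at `z` and `u` elsewhere: the set `{z} ∪ range (traj f u (f z a))` is invariant.
  set S := insert z (range (traj f u (f z a)))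
  refine ⟨Function.update u z a, fun t => ?_⟩
  have hS : ∀ y ∈ S, f y (Function.update u z a y) ∈ S := by
    rintro y (rfl | ⟨s, rfl⟩)
    · rw [Function.update_self]
      exact Or.inr ⟨0, rfl⟩
    · by_cases hy : traj f u (f z a) s = z
      · rw [hy, Function.update_self]
        exact Or.inr ⟨0, rfl⟩
      · rw [Function.update_of_ne hy]
        exact Or.inr ⟨s + 1, rfl⟩
  rcases traj_mem_of_forall_apply_mem f hS (mem_insert z _) t with h | ⟨s, hs⟩
  · rwa [h]
  · rw [← hs]
    exact hu s

theorem traj_notMem_viab (habs : ∀ x ∈ XF, ∀ a : U, f x a ∈ XF) {x : X} (hx : x ∉ viab f XF)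
    (u : X → U) (t : ℕ) : traj f u x t ∉ viab f XF := by
  induction t with
  | zero => exact hx
  | succ t ih =>
    intro hsucc
    have hsafe : traj f u x t ∉ XF := fun hfail =>
      notMem_of_mem_viab f hsucc (habs _ hfail _)
    exact ih (mem_viab_of_apply_mem_viab f hsafe hsucc)

end Trajectory

theorem tsum_pow_mul_le_of_eq_zero {γ R : ℝ} (hγ0 : 0 ≤ γ) (hγ1 : γ ≠ 1) {a : ℕ → ℝ} {T : ℕ}
    (ha : ∀ t, a t ≤ R) (hzero : ∀ t, T < t → a t = 0) :
    ∑' t, γ ^ t * a t ≤ R * (1 - γ ^ (T + 1)) / (1 - γ) := by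
  have hsub : (1 : ℝ) - γ ≠ 0 := sub_ne_zero.mpr hγ1.symm
  rw [tsum_eq_sum (s := Finset.range (T + 1))
    (fun t ht => by rw [hzero t (by simpa using ht), mul_zero])]
  calc ∑ t ∈ Finset.range (T + 1), γ ^ t * a t
      ≤ ∑ t ∈ Finset.range (T + 1), γ ^ t * R :=
        Finset.sum_le_sum fun t _ => mul_le_mul_of_nonneg_left (ha t) (pow_nonneg hγ0 t)
    _ = R * (1 - γ ^ (T + 1)) / (1 - γ) := by
        rw [← Finset.sum_mul, geom_sum_eq hγ1]
        field_simp
        ring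

section Value

variable {X U : Type*} {f : X → U → X} {XF : Set X} {γ : ℝ}

theorem le_RXU {r : X → U → ℝ} (hr : ∃ C, ∀ x a, r x a ≤ C) {x : X} (hx : x ∉ viab f XF)
    (a : U) : r x a ≤ RXU f XF r := by
  obtain ⟨C, hC⟩ := hr
  exact le_csSup ⟨C, by rintro y ⟨x', -, a', rfl⟩; exact hC x' a'⟩ ⟨x, hx, a, rfl⟩

theorem ret_le_of_traj_mem (hγ0 : 0 ≤ γ) (hγ1 : γ ≠ 1) {r : X → U → ℝ}
    (hr : ∃ C, ∀ x a, r x a ≤ C) (habs : ∀ x ∈ XF, ∀ a : U, f x a ∈ XF)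
    (hr0 : ∀ x ∈ XF, ∀ a : U, r x a = 0) {x : X} (hx : x ∉ viab f XF) {u : X → U} {T : ℕ}
    (hT : traj f u x T ∈ XF) :
    ret γ f r x u ≤ RXU f XF r * (1 - γ ^ (T + 1)) / (1 - γ) :=
  tsum_pow_mul_le_of_eq_zero hγ0 hγ1
    (fun t => le_RXU hr (traj_notMem_viab f habs hx u t) _)
    (fun _ ht => hr0 _ (traj_mem_of_le f habs u x ht.le hT) _)

theorem pow_le_risk (hγ0 : 0 ≤ γ) (hγ1 : γ < 1) {x : X} {u : X → U} {T : ℕ}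
    (hT : traj f u x T ∈ XF) : γ ^ T ≤ risk γ f XF x u := by
  have hnonneg : ∀ t, 0 ≤ γ ^ t * XF.indicator (fun _ => (1 : ℝ)) (traj f u x t) := fun t =>
    mul_nonneg (pow_nonneg hγ0 t) (indicator_nonneg (fun _ _ => zero_le_one) _)
  have hsummable : Summable fun t => γ ^ t * XF.indicator (fun _ => (1 : ℝ)) (traj f u x t) :=
    (summable_geometric_of_lt_one hγ0 hγ1).of_nonneg_of_le hnonneg fun t =>
      mul_le_of_le_one_right (pow_nonneg hγ0 t) (indicator_le_self' (fun _ _ => zero_le_one) _)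
  simpa [risk, indicator_of_mem hT] using hsummable.le_tsum T fun t _ => hnonneg t

end Value

theorem penalized_upper_bound_on_unviable_general {X U : Type*} [Nonempty U]
    (f : X → U → X) (XF : Set X) (γ : ℝ) (hγ0 : 0 < γ) (hγ1 : γ < 1)
    (r : X → U → ℝ) (hr : ∃ C : ℝ, ∀ x a, |r x a| ≤ C)
    (habs : ∀ x ∈ XF, ∀ a : U, f x a ∈ XF)
    (hr0 : ∀ x ∈ XF, ∀ a : U, r x a = 0)
    (Tf : ℕ) (hTf : ∀ x, x ∉ viab f XF → ∀ u : X → U, ∃ t ≤ Tf, traj f u x t ∈ XF)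
    (p : ℝ) (hp : 0 ≤ p) (x : X) (hx : x ∉ viab f XF) :
    Vpen γ f XF r p x ≤ RXU f XF r * (1 - γ ^ (Tf + 1)) / (1 - γ) - p * γ ^ Tf := by
  have hr_le : ∃ C, ∀ x a, r x a ≤ C := by
    obtain ⟨C, hC⟩ := hr
    exact ⟨C, fun x a => (le_abs_self _).trans (hC x a)⟩
  refine ciSup_le fun u => ?_
  obtain ⟨t, htTf, ht⟩ := hTf x hx u
  have hfail : traj f u x Tf ∈ XF := traj_mem_of_le f habs u x htTf ht
  have hret := ret_le_of_traj_mem hγ0.le hγ1.ne hr_le habs hr0 hx hfail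
  have hrisk := mul_le_mul_of_nonneg_left (pow_le_risk hγ0.le hγ1 hfail) hp
  linarith

/-- Lemma 3(ii), discrete time: upper bound on the penalized value function
on the unviability kernel. -/
theorem penalized_upper_bound_on_unviable {X U : Type*} [Nonempty U]
    (f : X → U → X) (XF : Set X) (γ : ℝ) (hγ0 : 0 < γ) (hγ1 : γ < 1)
    (r : X → U → ℝ) (hr : ∃ C : ℝ, ∀ x a, |r x a| ≤ C)
    (habs : ∀ x ∈ XF, ∀ a : U, f x a ∈ XF) (hFne : XF.Nonempty)
    (hr0 : ∀ x ∈ XF, ∀ a : U, r x a = 0)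
    (Tf : ℕ) (hTf : ∀ x, x ∉ viab f XF → ∀ u : X → U, ∃ t ≤ Tf, traj f u x t ∈ XF)
    (p : ℝ) (hp : 0 ≤ p) (x : X) (hx : x ∉ viab f XF) :
    Vpen γ f XF r p x ≤ RXU f XF r * (1 - γ ^ (Tf + 1)) / (1 - γ) - p * γ ^ Tf :=
  penalized_upper_bound_on_unviable_general f XF γ hγ0 hγ1 r hr habs hr0 Tf hTf p hp x hx
end
end
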